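/- Conditional list matching lemma: consider the following conditional GLS scheme. A is a random variable on a countable alphabet; {S_i^(k) : 1 ≤ i ≤ N, 1 ≤ k ≤ K} are i.i.d. Exp(1) random variables independent of A; for each a, q(·|a) is a probability mass function on {1,…,N} with q_j(a) > 0 for all j; the encoder sets Y = argmin_{1≤i≤N} min_{1≤k≤K} S_i^(k)/q_i(A). Given (Y, A) = (j, a), random variables Z_1, …, Z_K taking values in a countable alphabet are drawn i.i.d. from a conditional distribution p_{Z|Y,A}(·|j, a), conditionally independent of the family {S_i^(k)} given (Y, A). For each z in the Z-alphabet, p(·|z) is a probability mass function on {1,…,N} with p_j(z) > 0 for all j, and decoder k sets X^(k) = argmin_{1≤i≤N} S_i^(k)/p_i(Z_k). Then for every j ∈ {1,…,N}, every a with Pr[A = a] > 0, and every tuple (z_1,…,z_K) with Pr[Y = j, A = a, Z_1 = z_1, …, Z_K = z_K] > 0: Pr[Y ∈ {X^(1), …, X^(K)} | Y = j, A = a, Z_1 = z_1, …, Z_K = z_K] ≥ Σ_{k=1}^{K} ( K + q_j(a)/p_j(z_k) )^{−1}. (Theorem 2.) -/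

import Mathlib

/-!
Write `s = (S i k)` for the shared clocks and fix `j`, `a`, `z`. An exponential race with
rates `w` is won by the index minimising `s m / w m`, and index `m₀` wins with probability
`w m₀ / ∑ w` (condition on the winner's clock and integrate). With rates `q a i` at every
`(i, k)`, on `{A = a}` the encoder outputs `j` exactly when some `(j, k)` wins; these `K`
disjoint races each have probability `q a j / K`, so `Pr[Y = j | A = a] = q a j`.

Raising the rates in column `k` to `max (q a i) (q a j * p (z k) i / p (z k) j)` gives a
smaller race `M k` on which, in addition, decoder `k` outputs `j` once `Z k = z k`. Its rates
sum to at most `K + q a j / p (z k) j`, so `Pr[M k | Y = j, A = a] ≥ (K + q a j / p (z k) j)⁻¹`.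
The events `M k` depend on the clocks only, so the Markov chain turns this into the same bound
given `Z = z` as well, and since they are disjoint the bounds add up.
-/

open MeasureTheory ProbabilityTheory Real Set Function
open scoped ENNReal

namespace ProbabilityTheory

variable {Ω : Type*} [MeasurableSpace Ω] {μ : Measure Ω} {r : ℝ}

lemma expMeasure_eq_withDensity (r : ℝ) :
    expMeasure r = volume.withDensity (exponentialPDF r) := rfl

instance (r : ℝ) : NullSingletonClass (expMeasure r) :=
  nullSingletonClass_withDensity _

lemma expMeasure_Iic_zero (hr : 0 < r) : expMeasure r (Iic 0) = 0 := by
  have := isProbabilityMeasure_expMeasure hr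
  rw [← ofReal_cdf, cdf_expMeasure_eq hr, if_pos le_rfl]
  simp

lemma ae_pos_expMeasure (hr : 0 < r) : ∀ᵐ x ∂expMeasure r, 0 < x := by
  rw [ae_iff]
  exact measure_mono_null (fun x hx => not_lt.1 hx) (expMeasure_Iic_zero hr)

lemma expMeasure_Ioi (hr : 0 < r) {x : ℝ} (hx : 0 ≤ x) :
    expMeasure r (Ioi x) = ENNReal.ofReal (exp (-(r * x))) := by
  have := isProbabilityMeasure_expMeasure hr
  have hle : exp (-(r * x)) ≤ 1 := exp_le_one_iff.2 (by nlinarith)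
  rw [← compl_Iic, prob_compl_eq_one_sub measurableSet_Iic, ← ofReal_cdf, cdf_expMeasure_eq hr,
    if_pos hx, ← ENNReal.ofReal_one, ← ENNReal.ofReal_sub _ (by linarith), sub_sub_cancel]

lemma lintegral_exp_neg_mul_expMeasure (hr : 0 < r) {c : ℝ} (hc : 0 ≤ c) :
    ∫⁻ x, ENNReal.ofReal (exp (-(c * x))) ∂expMeasure r = ENNReal.ofReal (r / (r + c)) := by
  have hrc : 0 < r + c := by linarith
  have hpt : ∀ x, exponentialPDF r x * ENNReal.ofReal (exp (-(c * x)))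
      = (Ici 0).indicator (fun x => ENNReal.ofReal (r * exp (-(r + c) * x))) x := by
    intro x
    rcases le_or_gt 0 x with hx | hx
    · rw [indicator_of_mem (mem_Ici.2 hx), exponentialPDF_of_nonneg hx,
        ← ENNReal.ofReal_mul (by positivity), mul_assoc, ← exp_add]
      ring_nf
    · rw [indicator_of_notMem (notMem_Ici.2 hx), exponentialPDF_of_neg hx, zero_mul]
  have hmeas : Measurable (exponentialPDF r) := (measurable_exponentialPDFReal r).ennreal_ofReal
  rw [expMeasure_eq_withDensity, lintegral_withDensity_eq_lintegral_mul _ hmeas (by fun_prop)]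
  simp only [Pi.mul_apply]
  rw [lintegral_congr hpt, lintegral_indicator measurableSet_Ici,
    setLIntegral_congr Ioi_ae_eq_Ici.symm, ← ofReal_integral_eq_lintegral_ofReal,
    integral_const_mul, integral_exp_mul_Ioi (by linarith), mul_zero, exp_zero]
  · congr 1; field_simp
  · exact (exp_neg_integrableOn_Ioi 0 hrc).const_mul r
  · exact Filter.Eventually.of_forall fun x => by positivity

theorem IndepFun.ae_ne {f g : Ω → ℝ} (hf : Measurable f) (hg : Measurable g)
    (hfg : IndepFun f g μ) [IsFiniteMeasure μ] [NullSingletonClass (μ.map f)] :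
    ∀ᵐ ω ∂μ, f ω ≠ g ω := by
  have hD : MeasurableSet {x : ℝ × ℝ | x.1 = x.2} :=
    measurableSet_eq_fun measurable_fst measurable_snd
  rw [ae_iff]
  simp only [ne_eq, not_not]
  change μ ((fun ω => (f ω, g ω)) ⁻¹' {x : ℝ × ℝ | x.1 = x.2}) = 0
  rw [← Measure.map_apply (hf.prodMk hg) hD,
    (indepFun_iff_map_prod_eq_prod_map_map hf.aemeasurable hg.aemeasurable).1 hfg,
    Measure.prod_apply_symm hD]
  have hslice : ∀ y : ℝ, (fun x => (x, y)) ⁻¹' {x : ℝ × ℝ | x.1 = x.2} = {y} := fun y => by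
    ext; simp
  simp [hslice]

lemma ae_forall_pos_of_map_eq_expMeasure {ι : Type*} [Countable ι] {f : ι → Ω → ℝ}
    (hf : ∀ i, Measurable (f i)) (hr : 0 < r) (h : ∀ i, μ.map (f i) = expMeasure r) :
    ∀ᵐ ω ∂μ, ∀ i, 0 < f i ω :=
  ae_all_iff.2 fun i => ae_of_ae_map (hf i).aemeasurable ((h i) ▸ ae_pos_expMeasure hr)

lemma ae_injective_of_indepFun {κ : Type*} [Countable κ] [IsFiniteMeasure μ] {f : κ → Ω → ℝ}
    (hf : ∀ k, Measurable (f k)) (hindep : Pairwise fun k k' => IndepFun (f k) (f k') μ)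
    [∀ k, NullSingletonClass (μ.map (f k))] : ∀ᵐ ω ∂μ, Injective fun k => f k ω := by
  have h : ∀ k k', ∀ᵐ ω ∂μ, k ≠ k' → f k ω ≠ f k' ω := fun k k' => by
    rcases eq_or_ne k k' with rfl | hk
    · exact .of_forall fun _ h => absurd rfl h
    · exact ((hindep hk).ae_ne (hf k) (hf k')).mono fun _ h _ => h
  filter_upwards [ae_all_iff.2 fun k => ae_all_iff.2 (h k)] with ω hω k k' hkk'
  exact not_imp_not.1 (hω k k') hkk'

lemma measure_preimage_inter_eq_mul {β γ : Type*} [MeasurableSpace β] [MeasurableSingletonClass β]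
    [MeasurableSpace γ] {A : Ω → β} {X : Ω → γ} (h : IndepFun A X μ) (a : β) {E : Set γ}
    (hE : MeasurableSet E) : μ (X ⁻¹' E ∩ {ω | A ω = a}) = μ (X ⁻¹' E) * μ {ω | A ω = a} := by
  rw [inter_comm, mul_comm]
  exact h.measure_inter_preimage_eq_mul _ _ (measurableSet_singleton a) hE

lemma le_measure_inter_of_markov [IsFiniteMeasure μ] {M B C : Set Ω} {x : ℝ≥0∞}
    (hmarkov : μ (M ∩ B) * μ C = μ (M ∩ C) * μ B) (hC : μ C ≠ 0) (h : x * μ C ≤ μ (M ∩ C)) :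
    x * μ B ≤ μ (M ∩ B) := by
  rw [← ENNReal.mul_le_mul_iff_left hC (measure_ne_top μ C), hmarkov, mul_right_comm]
  gcongr

lemma sum_measure_inter_le_cond {ι : Type*} [Fintype ι] {M : ι → Set Ω} {B T : Set Ω}
    (hM : ∀ i, MeasurableSet (M i)) (hdisj : Pairwise (Disjoint on M))
    (hT : ∀ i, ∀ᵐ ω ∂μ, ω ∈ M i → ω ∈ B → ω ∈ T) :
    (μ B)⁻¹ * ∑ i, μ (M i ∩ B) ≤ μ[T|B] := by
  rw [ProbabilityTheory.cond, Measure.smul_apply, smul_eq_mul]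
  gcongr
  calc ∑ i, μ (M i ∩ B) = μ.restrict B (⋃ i, M i) := by
        rw [measure_iUnion hdisj hM, tsum_fintype]
        simp only [Measure.restrict_apply (hM _)]
    _ = μ ((⋃ i, M i) ∩ B) := Measure.restrict_apply (.iUnion hM)
    _ ≤ μ (T ∩ B) := by
        refine measure_mono_ae ?_
        filter_upwards [ae_all_iff.2 hT] with ω hω ⟨hM, hB⟩
        obtain ⟨i, hi⟩ := mem_iUnion.1 hM
        exact ⟨hω i hi hB, hB⟩
    _ ≤ μ.restrict B T := Measure.le_restrict_apply _ _

end ProbabilityTheory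

section StrictArgmin

variable {ι : Type*}

def IsStrictArgmin {β : Type*} [Preorder β] (g : ι → β) (i₀ : ι) : Prop :=
  ∀ i, i ≠ i₀ → g i₀ < g i

namespace IsStrictArgmin

variable {β : Type*} [Preorder β] {g : ι → β} {a b : ι}

lemma unique (ha : IsStrictArgmin g a) (hb : IsStrictArgmin g b) : a = b := by
  by_contra h
  exact lt_asymm (ha b (Ne.symm h)) (hb a h)

lemma comp {κ : Type*} {f : κ → ι} (hf : Injective f) {k : κ} (h : IsStrictArgmin g (f k)) :
    IsStrictArgmin (g ∘ f) k :=
  fun _ hk => h _ (hf.ne hk)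

lemma of_div_const {g : ι → ℝ} {c : ℝ} (hc : 0 < c) (h : IsStrictArgmin (fun i => g i / c) a) :
    IsStrictArgmin g a :=
  fun i hi => (div_lt_div_iff_of_pos_right hc).1 (h i hi)

lemma of_div_le {s w w' : ι → ℝ} (hs : ∀ i, 0 ≤ s i) (hw : ∀ i, 0 < w i)
    (hle : ∀ i, w i ≤ w' i) (ha : w' a = w a) (h : IsStrictArgmin (fun i => s i / w' i) a) :
    IsStrictArgmin (fun i => s i / w i) a := fun i hi =>
  calc s a / w a = s a / w' a := by rw [ha]
    _ < s i / w' i := h i hi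
    _ ≤ s i / w i := div_le_div_of_nonneg_left (hs i) (hw i) (hle i)

end IsStrictArgmin

def raceSet (w : ι → ℝ) (i₀ : ι) : Set (ι → ℝ) :=
  {s | IsStrictArgmin (fun i => s i / w i) i₀}

lemma measurableSet_raceSet [Countable ι] (w : ι → ℝ) (i₀ : ι) :
    MeasurableSet (raceSet w i₀) := by
  have : raceSet w i₀ = ⋂ i, ⋂ (_ : i ≠ i₀), {s : ι → ℝ | s i₀ / w i₀ < s i / w i} := by
    ext s; simp [raceSet, IsStrictArgmin]
  rw [this]
  exact .iInter fun i => .iInter fun _ => measurableSet_lt (by fun_prop) (by fun_prop)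

lemma disjoint_raceSet {w w' : ι → ℝ} {a b : ι} (hab : a ≠ b) (ha : w a = w' a) (hb : w b = w' b) :
    Disjoint (raceSet w a) (raceSet w' b) := by
  refine Set.disjoint_left.2 fun s hsa hsb => lt_asymm (hsa b hab.symm) ?_
  simpa only [ha, hb] using hsb a hab

end StrictArgmin

section Race

variable {Ω ι : Type*} [MeasurableSpace Ω] {μ : Measure Ω} {r : ℝ} {f : ι → Ω → ℝ}

lemma measure_biInter_preimage_Ioi (hf : ∀ i, Measurable (f i)) (hindep : iIndepFun f μ)
    (hr : 0 < r) (hexp : ∀ i, μ.map (f i) = expMeasure r) (T : Finset ι) {x : ι → ℝ}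
    (hx : ∀ i, 0 ≤ x i) :
    μ (⋂ i ∈ T, f i ⁻¹' Ioi (x i)) = ENNReal.ofReal (exp (-(r * ∑ i ∈ T, x i))) := by
  rw [hindep.meas_biInter fun i _ => ⟨Ioi (x i), measurableSet_Ioi, rfl⟩]
  simp_rw [← Measure.map_apply (hf _) measurableSet_Ioi, hexp, expMeasure_Ioi hr (hx _)]
  rw [← ENNReal.ofReal_prod_of_nonneg fun i _ => (exp_pos _).le, ← exp_sum, Finset.mul_sum,
    ← Finset.sum_neg_distrib]

theorem measure_preimage_raceSet [Fintype ι] (hf : ∀ i, Measurable (f i))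
    (hindep : iIndepFun f μ) (hr : 0 < r) (hexp : ∀ i, μ.map (f i) = expMeasure r) {w : ι → ℝ}
    (hw : ∀ i, 0 < w i) (i₀ : ι) :
    μ ((fun ω i => f i ω) ⁻¹' raceSet w i₀) = ENNReal.ofReal (w i₀ / ∑ i, w i) := by
  classical
  have := hindep.isProbabilityMeasure
  set T := Finset.univ.erase i₀
  set c : ι → ℝ := fun i => w i / w i₀
  have hc : ∀ i, 0 ≤ c i := fun i => (div_pos (hw i) (hw i₀)).le
  set V : Ω → T → ℝ := fun ω i => f i ω
  have hV : Measurable V := measurable_pi_lambda _ fun i => hf i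
  have hUV : IndepFun (f i₀) V μ :=
    (hindep.indepFun_finset {i₀} T (by simp [T]) hf).comp
      (φ := fun x : ({i₀} : Finset ι) → ℝ => x ⟨i₀, Finset.mem_singleton_self i₀⟩) (ψ := id)
      (_mγ := inferInstance) (measurable_pi_apply _) measurable_id
  set Q : Set (ℝ × (T → ℝ)) := {x | ∀ i : T, c i * x.1 < x.2 i}
  have hQ : MeasurableSet Q := by
    have : Q = ⋂ i : T, {x : ℝ × (T → ℝ) | c i * x.1 < x.2 i} := by ext; simp [Q]
    exact this ▸ .iInter fun i => measurableSet_lt (by fun_prop) (by fun_prop)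
  have hevent : (fun ω i => f i ω) ⁻¹' raceSet w i₀ = (fun ω => (f i₀ ω, V ω)) ⁻¹' Q := by
    ext ω
    simp only [raceSet, IsStrictArgmin, mem_preimage, mem_ofPred_eq, Subtype.forall, T,
      Finset.mem_erase, Finset.mem_univ, and_true, V, c, Q]
    refine forall₂_congr fun i _ => ?_
    rw [div_mul_comm, mul_comm, ← lt_div_iff₀' (hw i)]
  have hslice (u : ℝ) (hu : 0 ≤ u) :
      μ.map V (Prod.mk u ⁻¹' Q) = ENNReal.ofReal (exp (-((r * ∑ i ∈ T, c i) * u))) := by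
    have hpre : V ⁻¹' (Prod.mk u ⁻¹' Q) = ⋂ i ∈ T, f i ⁻¹' Ioi (c i * u) := by
      ext ω; simp [Q, V]
    rw [Measure.map_apply hV (hQ.preimage measurable_prodMk_left), hpre,
      measure_biInter_preimage_Ioi hf hindep hr hexp T fun i => mul_nonneg (hc i) hu,
      ← Finset.sum_mul, mul_assoc]
  have hsum : r * ∑ i ∈ T, c i = r * ((∑ i, w i) - w i₀) / w i₀ := by
    rw [← Finset.sum_div, Finset.sum_erase_eq_sub (Finset.mem_univ _), mul_div_assoc]
  calc μ ((fun ω i => f i ω) ⁻¹' raceSet w i₀)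
      = ((expMeasure r).prod (μ.map V)) Q := by
        rw [hevent, ← Measure.map_apply ((hf i₀).prodMk hV) hQ,
          (indepFun_iff_map_prod_eq_prod_map_map (hf i₀).aemeasurable hV.aemeasurable).1 hUV,
          hexp]
    _ = ∫⁻ u, μ.map V (Prod.mk u ⁻¹' Q) ∂expMeasure r := Measure.prod_apply hQ
    _ = ∫⁻ u, ENNReal.ofReal (exp (-((r * ∑ i ∈ T, c i) * u))) ∂expMeasure r := by
        refine lintegral_congr_ae ?_
        filter_upwards [ae_pos_expMeasure hr] with u hu using hslice u hu.le
    _ = ENNReal.ofReal (w i₀ / ∑ i, w i) := by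
        rw [lintegral_exp_neg_mul_expMeasure hr
          (mul_nonneg hr.le (Finset.sum_nonneg fun i _ => hc i)), hsum]
        congr 1
        have := hw i₀
        field_simp
        ring

end Race

section Encoder

variable {ι κ : Type*} {w : ι → ℝ} {s : ι × κ → ℝ} {j : ι}

lemma isStrictArgmin_iInf_div_of_mem_raceSet [Finite κ] (hw : ∀ i, 0 < w i) {k : κ}
    (h : s ∈ raceSet (fun m => w m.1) (j, k)) :
    IsStrictArgmin (fun i => (⨅ k, s (i, k)) / w i) j := by
  have : Nonempty κ := ⟨k⟩
  intro i hi
  obtain ⟨k', hk'⟩ := exists_eq_ciInf_of_finite (f := fun k => s (i, k))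
  calc (⨅ k, s (j, k)) / w j ≤ s (j, k) / w j :=
        div_le_div_of_nonneg_right (ciInf_le (Finite.bddBelow_range _) k) (hw j).le
    _ < s (i, k') / w i := h (i, k') (by simp [hi])
    _ = (⨅ k, s (i, k)) / w i := by rw [hk']

lemma exists_isStrictArgmin_of_iInf_div [Finite κ] [Nonempty κ] (hw : ∀ i, 0 < w i)
    (hinj : Injective fun k => s (j, k)) (h : IsStrictArgmin (fun i => (⨅ k, s (i, k)) / w i) j) :
    ∃ k, s ∈ raceSet (fun m => w m.1) (j, k) := by
  obtain ⟨k, hk⟩ := exists_eq_ciInf_of_finite (f := fun k => s (j, k))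
  refine ⟨k, fun ⟨i, k'⟩ hik => ?_⟩
  rcases eq_or_ne i j with rfl | hi
  · have hk' : k' ≠ k := fun h => hik (by rw [h])
    refine div_lt_div_of_pos_right (lt_of_le_of_ne ?_ (hinj.ne hk'.symm)) (hw i)
    exact hk ▸ ciInf_le (Finite.bddBelow_range _) k'
  · calc s (j, k) / w j = (⨅ k, s (j, k)) / w j := by rw [hk]
      _ < (⨅ k, s (i, k)) / w i := h i hi
      _ ≤ s (i, k') / w i :=
        div_le_div_of_nonneg_right (ciInf_le (Finite.bddBelow_range _) k') (hw i).le

end Encoder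

section MatchRates

variable {ι κ : Type*} [DecidableEq κ]

/-- Winning the race with these rates at `(j, k)` means winning both the race with rates `w`
and, in column `k`, the race with rates `v` rescaled to agree with `w` at `j`. -/
noncomputable def matchRates (w v : ι → ℝ) (j : ι) (k : κ) (m : ι × κ) : ℝ :=
  if m.2 = k then max (w m.1) (v m.1 * (w j / v j)) else w m.1

variable {w v : ι → ℝ} {j : ι} {k : κ}

lemma matchRates_self (hv : v j ≠ 0) : matchRates w v j k (j, k) = w j := by
  simp [matchRates, mul_div_cancel₀ _ hv]

lemma le_matchRates (m : ι × κ) : w m.1 ≤ matchRates w v j k m := by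
  unfold matchRates
  split_ifs
  exacts [le_max_left _ _, le_rfl]

lemma sum_matchRates_le [Fintype ι] [Fintype κ] (hw : ∀ i, 0 ≤ w i) (hv : ∀ i, 0 < v i) :
    ∑ m, matchRates w v j k m ≤ Fintype.card κ * ∑ i, w i + w j / v j * ∑ i, v i := by
  have hc : 0 ≤ w j / v j := div_nonneg (hw j) (hv j).le
  calc ∑ m, matchRates w v j k m
      ≤ ∑ m : ι × κ, (w m.1 + if m.2 = k then v m.1 * (w j / v j) else 0) := by
        refine Finset.sum_le_sum fun m _ => ?_
        unfold matchRates
        split_ifs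
        exacts [max_le_add_of_nonneg (hw _) (mul_nonneg (hv _).le hc), by simp]
    _ = Fintype.card κ * ∑ i, w i + w j / v j * ∑ i, v i := by
        simp [Finset.sum_add_distrib, Fintype.sum_prod_type, ← Finset.sum_mul, mul_comm]

lemma mem_raceSet_of_mem_raceSet_matchRates {s : ι × κ → ℝ} (hs : ∀ m, 0 ≤ s m)
    (hw : ∀ i, 0 < w i) (hv : ∀ i, 0 < v i) (h : s ∈ raceSet (matchRates w v j k) (j, k)) :
    s ∈ raceSet (fun m => w m.1) (j, k) :=
  IsStrictArgmin.of_div_le hs (fun m => hw m.1) le_matchRates (matchRates_self (hv j).ne') h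

lemma isStrictArgmin_of_mem_raceSet_matchRates {s : ι × κ → ℝ} (hs : ∀ m, 0 ≤ s m)
    (hw : ∀ i, 0 < w i) (hv : ∀ i, 0 < v i) (h : s ∈ raceSet (matchRates w v j k) (j, k)) :
    IsStrictArgmin (fun i => s (i, k) / v i) j := by
  have hc : 0 < w j / v j := div_pos (hw j) (hv j)
  refine IsStrictArgmin.of_div_const hc ?_
  simp_rw [div_div]
  refine IsStrictArgmin.of_div_le (fun i => hs (i, k)) (fun i => mul_pos (hv i) hc)
    (fun i => ?_) ?_ (IsStrictArgmin.comp (g := fun m => s m / matchRates w v j k m)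
      (Prod.mk_left_injective k) h)
  · simp only [matchRates]
    exact le_max_right _ _
  simp [matchRates_self (hv j).ne', mul_div_cancel₀ _ (hv j).ne']

lemma disjoint_raceSet_matchRates {v' : ι → ℝ} {k' : κ} (hv : v j ≠ 0) (hv' : v' j ≠ 0)
    (hk : k ≠ k') :
    Disjoint (raceSet (matchRates w v j k) (j, k)) (raceSet (matchRates w v' j k') (j, k')) :=
  disjoint_raceSet (by simpa using hk) (by simp [matchRates, hk, mul_div_cancel₀ _ hv])
    (by simp [matchRates, hk.symm, mul_div_cancel₀ _ hv'])

end MatchRates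

section Scheme

variable {Ω : Type*} [MeasurableSpace Ω] {μ : Measure Ω} {r : ℝ}

variable {ι κ α : Type*} {S : ι → κ → Ω → ℝ}
  {A : Ω → α} {q : α → ι → ℝ} {Y : Ω → ι}

lemma ae_encoder_eq_of_mem_raceSet [Finite κ] (hq : ∀ a i, 0 < q a i)
    (hY : ∀ᵐ ω ∂μ, IsStrictArgmin (fun i => (⨅ k, S i k ω) / q (A ω) i) (Y ω))
    (j : ι) (k : κ) (a : α) :
    ∀ᵐ ω ∂μ, A ω = a → (fun m : ι × κ => S m.1 m.2 ω) ∈ raceSet (fun m => q a m.1) (j, k) →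
      Y ω = j := by
  filter_upwards [hY] with ω hYω hA hrace
  subst hA
  exact hYω.unique (isStrictArgmin_iInf_div_of_mem_raceSet (hq _) hrace)

theorem measure_encoder_inter_eq [Fintype ι] [Fintype κ] [Nonempty κ] [MeasurableSpace α]
    [MeasurableSingletonClass α]
    (hS : ∀ i k, Measurable (S i k)) (hindep : iIndepFun (fun m : ι × κ => S m.1 m.2) μ)
    (hr : 0 < r) (hexp : ∀ i k, μ.map (S i k) = expMeasure r)
    (hAS : IndepFun A (fun ω (m : ι × κ) => S m.1 m.2 ω) μ)
    (hq : ∀ a i, 0 < q a i) (hqsum : ∀ a, ∑ i, q a i = 1)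
    (hY : ∀ᵐ ω ∂μ, IsStrictArgmin (fun i => (⨅ k, S i k ω) / q (A ω) i) (Y ω)) (j : ι) (a : α) :
    μ ({ω | Y ω = j} ∩ {ω | A ω = a}) = ENNReal.ofReal (q a j) * μ {ω | A ω = a} := by
  classical
  have := hindep.isProbabilityMeasure
  set E : κ → Set (ι × κ → ℝ) := fun k => raceSet (fun m => q a m.1) (j, k)
  have hinj : ∀ᵐ ω ∂μ, Injective fun k => S j k ω :=
    have (k : κ) : NullSingletonClass (μ.map (S j k)) := (hexp j k).symm ▸ inferInstance
    ae_injective_of_indepFun (hS j) fun k k' hk =>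
      hindep.indepFun (i := (j, k)) (j := (j, k')) (by simpa using hk)
  set F : Set Ω := (fun ω (m : ι × κ) => S m.1 m.2 ω) ⁻¹' ⋃ k, E k
  have hcover : ({ω | Y ω = j} ∩ {ω | A ω = a} : Set Ω) =ᵐ[μ] (F ∩ {ω | A ω = a} : Set Ω) := by
    filter_upwards [hY, hinj, ae_all_iff.2 (ae_encoder_eq_of_mem_raceSet hq hY j · a)]
      with ω hYω hinjω hrace
    refine propext ⟨fun ⟨hYj, hA⟩ => ⟨?_, hA⟩, fun ⟨hE, hA⟩ => ⟨?_, hA⟩⟩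
    · change Y ω = j at hYj
      change A ω = a at hA
      rw [hYj, hA] at hYω
      exact mem_iUnion.2 (exists_isStrictArgmin_of_iInf_div (hq a) hinjω hYω)
    · obtain ⟨k, hk⟩ := mem_iUnion.1 hE
      exact hrace k hA hk
  have hdisj : Pairwise (Disjoint on E) := fun k k' hk =>
    disjoint_raceSet (by simpa using hk) rfl rfl
  have hmeas : ∀ k, MeasurableSet (E k) := fun k => measurableSet_raceSet _ _
  have hrace : ∀ k, μ ((fun ω (m : ι × κ) => S m.1 m.2 ω) ⁻¹' E k)
      = ENNReal.ofReal (q a j / Fintype.card κ) := fun k => by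
    have hsum : ∑ m : ι × κ, q a m.1 = Fintype.card κ := by
      simp [Fintype.sum_prod_type, ← Finset.mul_sum, hqsum]
    rw [← hsum]
    exact measure_preimage_raceSet (fun m => hS m.1 m.2) hindep hr (fun m => hexp m.1 m.2)
      (fun m => hq a m.1) (j, k)
  rw [measure_congr hcover, measure_preimage_inter_eq_mul hAS a (.iUnion hmeas), preimage_iUnion,
    measure_iUnion (fun k k' hk => (hdisj hk).preimage _)
      (fun k => (hmeas k).preimage (measurable_pi_lambda _ fun m => hS m.1 m.2)), tsum_fintype,
    Finset.sum_congr rfl fun k _ => hrace k, Finset.sum_const, Finset.card_univ, nsmul_eq_mul,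
    ← ENNReal.ofReal_natCast, ← ENNReal.ofReal_mul (by positivity),
    mul_div_cancel₀ _ (by positivity)]

theorem le_measure_matchRace_inter [Fintype ι] [Fintype κ] [DecidableEq κ] [MeasurableSpace α]
    [MeasurableSingletonClass α]
    (hS : ∀ i k, Measurable (S i k)) (hindep : iIndepFun (fun m : ι × κ => S m.1 m.2) μ)
    (hr : 0 < r) (hexp : ∀ i k, μ.map (S i k) = expMeasure r)
    (hAS : IndepFun A (fun ω (m : ι × κ) => S m.1 m.2 ω) μ)
    (hq : ∀ a i, 0 < q a i) (hqsum : ∀ a, ∑ i, q a i = 1)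
    (hY : ∀ᵐ ω ∂μ, IsStrictArgmin (fun i => (⨅ k, S i k ω) / q (A ω) i) (Y ω))
    {v : ι → ℝ} (hv : ∀ i, 0 < v i) (hvsum : ∑ i, v i = 1) (j : ι) (k : κ) (a : α) :
    ENNReal.ofReal ((Fintype.card κ + q a j / v j)⁻¹) * μ ({ω | Y ω = j} ∩ {ω | A ω = a})
      ≤ μ ((fun ω (m : ι × κ) => S m.1 m.2 ω) ⁻¹' raceSet (matchRates (q a) v j k) (j, k)
          ∩ ({ω | Y ω = j} ∩ {ω | A ω = a})) := by
  have : Nonempty κ := ⟨k⟩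
  set M := (fun ω (m : ι × κ) => S m.1 m.2 ω) ⁻¹' raceSet (matchRates (q a) v j k) (j, k)
  have hMA : μ (M ∩ {ω | A ω = a}) ≤ μ (M ∩ ({ω | Y ω = j} ∩ {ω | A ω = a})) := by
    refine measure_mono_ae ?_
    filter_upwards [ae_forall_pos_of_map_eq_expMeasure (fun m : ι × κ => hS m.1 m.2) hr
      (fun m => hexp m.1 m.2), ae_encoder_eq_of_mem_raceSet hq hY j k a] with ω hpos hYω ⟨hM, hA⟩
    exact ⟨hM, hYω hA (mem_raceSet_of_mem_raceSet_matchRates (fun m => (hpos m).le) (hq a) hv hM),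
      hA⟩
  refine le_trans ?_ hMA
  have hD : 0 < (Fintype.card κ : ℝ) + q a j / v j := by
    have := hq a j; have := hv j; positivity
  have hsum := sum_matchRates_le (j := j) (k := k) (fun i => (hq a i).le) hv
  rw [hqsum, hvsum, mul_one, mul_one] at hsum
  have hsum_pos : 0 < ∑ m, matchRates (q a) v j k m :=
    Finset.sum_pos (fun m _ => (hq a m.1).trans_le (le_matchRates m)) ⟨(j, k), Finset.mem_univ _⟩
  rw [measure_preimage_inter_eq_mul hAS a (measurableSet_raceSet _ _),
    measure_preimage_raceSet (fun m => hS m.1 m.2) hindep hr (fun m => hexp m.1 m.2)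
      (fun m => (hq a m.1).trans_le (le_matchRates m)) (j, k),
    measure_encoder_inter_eq hS hindep hr hexp hAS hq hqsum hY j a, ← mul_assoc,
    ← ENNReal.ofReal_mul (inv_nonneg.2 hD.le), matchRates_self (hv j).ne', inv_mul_eq_div]
  gcongr
  exact (hq a j).le

end Scheme

theorem conditional_list_matching_lemma_general
    {Ω : Type*} [MeasurableSpace Ω] (μ : Measure Ω) [IsProbabilityMeasure μ]
    {α : Type*} [MeasurableSpace α] [MeasurableSingletonClass α]
    {ζ : Type*}
    (N K : ℕ)
    (A : Ω → α)
    (q : α → Fin N → ℝ) (hq : ∀ a i, 0 < q a i) (hqsum : ∀ a, ∑ i, q a i = 1)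
    (p : ζ → Fin N → ℝ) (hp : ∀ z i, 0 < p z i) (hpsum : ∀ z, ∑ i, p z i = 1)
    (S : Fin N → Fin K → Ω → ℝ) (hSmeas : ∀ i k, Measurable (S i k))
    (hSindep : iIndepFun
      (fun ik : Fin N × Fin K => S ik.1 ik.2) μ)
    (hSexp : ∀ i k, μ.map (S i k) = expMeasure 1)
    -- `A` is independent of the family `{S i k}`
    (hAS : IndepFun A (fun ω => fun ik : Fin N × Fin K => S ik.1 ik.2 ω) μ)
    (Y : Ω → Fin N)
    -- `Y` is a.s. the unique argmin of `i ↦ (min_k S i k) / q (A ω) i`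
    (hY : ∀ᵐ ω ∂μ, ∀ i : Fin N, i ≠ Y ω →
      (⨅ k : Fin K, S (Y ω) k ω) / q (A ω) (Y ω) < (⨅ k : Fin K, S i k ω) / q (A ω) i)
    (Z : Fin K → Ω → ζ)
    -- Markov chain `{S i k} → (Y, A) → (Z 1, …, Z K)`: the `Z k` are conditionally
    -- independent of the shared randomness given `(Y, A)`
    (hMarkov : ∀ (j : Fin N) (a : α) (z : Fin K → ζ)
        (E : Set ((Fin N × Fin K) → ℝ)), MeasurableSet E →
      μ ({ω | (fun ik : Fin N × Fin K => S ik.1 ik.2 ω) ∈ E} ∩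
            ({ω | Y ω = j} ∩ {ω | A ω = a} ∩ {ω | ∀ k, Z k ω = z k}))
          * μ ({ω | Y ω = j} ∩ {ω | A ω = a})
        = μ ({ω | (fun ik : Fin N × Fin K => S ik.1 ik.2 ω) ∈ E} ∩
              ({ω | Y ω = j} ∩ {ω | A ω = a}))
          * μ ({ω | Y ω = j} ∩ {ω | A ω = a} ∩ {ω | ∀ k, Z k ω = z k}))
    (X : Fin K → Ω → Fin N)
    -- `X k` is a.s. the unique argmin of `i ↦ S i k / p (Z k ω) i`
    (hX : ∀ᵐ ω ∂μ, ∀ k : Fin K, ∀ i : Fin N, i ≠ X k ω →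
      S (X k ω) k ω / p (Z k ω) (X k ω) < S i k ω / p (Z k ω) i) :
    ∀ (j : Fin N) (a : α) (z : Fin K → ζ),
      μ ({ω | Y ω = j} ∩ {ω | A ω = a} ∩ {ω | ∀ k, Z k ω = z k}) ≠ 0 →
      ENNReal.ofReal (∑ k : Fin K, ((K : ℝ) + q a j / p (z k) j)⁻¹)
        ≤ μ[|{ω | Y ω = j} ∩ {ω | A ω = a} ∩ {ω | ∀ k, Z k ω = z k}]
            {ω | ∃ k : Fin K, X k ω = Y ω} := by
  intro j a z hB
  set C := {ω | Y ω = j} ∩ {ω | A ω = a}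
  set B := C ∩ {ω | ∀ k, Z k ω = z k}
  set M : Fin K → Set Ω := fun k => (fun ω (m : Fin N × Fin K) => S m.1 m.2 ω) ⁻¹'
    raceSet (matchRates (q a) (p (z k)) j k) (j, k)
  have hMB (k : Fin K) : ENNReal.ofReal ((K + q a j / p (z k) j)⁻¹) * μ B ≤ μ (M k ∩ B) := by
    refine le_measure_inter_of_markov (hMarkov j a z _ (measurableSet_raceSet _ _))
      (fun h => hB (measure_mono_null inter_subset_left h)) ?_
    simpa using le_measure_matchRace_inter hSmeas hSindep one_pos hSexp hAS hq hqsum hY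
      (hp (z k)) (hpsum (z k)) j k a
  have hmatch (k : Fin K) : ∀ᵐ ω ∂μ, ω ∈ M k → ω ∈ B → ω ∈ {ω | ∃ k, X k ω = Y ω} := by
    filter_upwards [hX, ae_forall_pos_of_map_eq_expMeasure (fun m : Fin N × Fin K =>
      hSmeas m.1 m.2) one_pos (fun m => hSexp m.1 m.2)] with ω hXω hpos hM ⟨⟨hYj, _⟩, hZ⟩
    have hXk : IsStrictArgmin (fun i => S i k ω / p (z k) i) (X k ω) := hZ k ▸ hXω k
    exact ⟨k, hYj ▸ hXk.unique (isStrictArgmin_of_mem_raceSet_matchRates (fun m => (hpos m).le)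
      (hq a) (hp (z k)) hM)⟩
  calc ENNReal.ofReal (∑ k : Fin K, ((K : ℝ) + q a j / p (z k) j)⁻¹)
      = (μ B)⁻¹ * ∑ k, ENNReal.ofReal ((K + q a j / p (z k) j)⁻¹) * μ B := by
        rw [← Finset.sum_mul, mul_comm, ENNReal.mul_inv_cancel_right hB (measure_ne_top _ _),
          ENNReal.ofReal_sum_of_nonneg fun k _ => inv_nonneg.2 (by
            have := hq a j; have := hp (z k) j; positivity)]
    _ ≤ (μ B)⁻¹ * ∑ k, μ (M k ∩ B) := by gcongr with k; exact hMB k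
    _ ≤ μ[|B] {ω | ∃ k, X k ω = Y ω} :=
        sum_measure_inter_le_cond (fun k => (measurableSet_raceSet _ _).preimage
          (measurable_pi_lambda _ fun m => hSmeas m.1 m.2))
          (fun k k' hk => (disjoint_raceSet_matchRates (hp _ _).ne' (hp _ _).ne' hk).preimage _)
          hmatch

/-- **Conditional list matching lemma (Theorem 2).**
The encoder observes `A` and selects `Y = argmin_i (min_k S i k) / q (A ·) i` from the
shared i.i.d. `Exp(1)` family `{S i k}` (independent of `A`).  Given `(Y, A) = (j, a)`,
the variables `Z 1, …, Z K` are drawn i.i.d. from a conditional pmf `pZ j a`,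
conditionally independent of `{S i k}` given `(Y, A)` (the Markov chain
`{S i k} → (Y, A) → (Z 1, …, Z K)`).  Decoder `k` selects
`X k = argmin_i S i k / p (Z k ·) i`.  Then for all `j`, `a`, `z 1, …, z K` with
`Pr[Y = j, A = a, Z = z] > 0`,
`Pr[Y ∈ {X 1, …, X K} | Y = j, A = a, Z = z] ≥ ∑ k, (K + q a j / p (z k) j)⁻¹`. -/
theorem conditional_list_matching_lemma
    {Ω : Type*} [MeasurableSpace Ω] (μ : Measure Ω) [IsProbabilityMeasure μ]
    {α : Type*} [MeasurableSpace α] [Countable α] [MeasurableSingletonClass α]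
    {ζ : Type*} [MeasurableSpace ζ] [Countable ζ] [MeasurableSingletonClass ζ]
    (N K : ℕ) (hN : 0 < N) (hK : 0 < K)
    (A : Ω → α) (hAmeas : Measurable A)
    (q : α → Fin N → ℝ) (hq : ∀ a i, 0 < q a i) (hqsum : ∀ a, ∑ i, q a i = 1)
    (p : ζ → Fin N → ℝ) (hp : ∀ z i, 0 < p z i) (hpsum : ∀ z, ∑ i, p z i = 1)
    (S : Fin N → Fin K → Ω → ℝ) (hSmeas : ∀ i k, Measurable (S i k))
    (hSindep : iIndepFun
      (fun ik : Fin N × Fin K => S ik.1 ik.2) μ)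
    (hSexp : ∀ i k, μ.map (S i k) = expMeasure 1)
    -- `A` is independent of the family `{S i k}`
    (hAS : IndepFun A (fun ω => fun ik : Fin N × Fin K => S ik.1 ik.2 ω) μ)
    (Y : Ω → Fin N) (hYmeas : Measurable Y)
    -- `Y` is a.s. the unique argmin of `i ↦ (min_k S i k) / q (A ω) i`
    (hY : ∀ᵐ ω ∂μ, ∀ i : Fin N, i ≠ Y ω →
      (⨅ k : Fin K, S (Y ω) k ω) / q (A ω) (Y ω) < (⨅ k : Fin K, S i k ω) / q (A ω) i)
    (Z : Fin K → Ω → ζ) (hZmeas : ∀ k, Measurable (Z k))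
    -- the conditional pmf `p_{Z∣Y,A}` of each `Z k` given `(Y, A)`
    (pZ : Fin N → α → ζ → ℝ) (hpZ : ∀ j a z, 0 ≤ pZ j a z)
    (hpZsum : ∀ j a, ∑' z : ζ, pZ j a z = 1)
    -- given `(Y, A) = (j, a)`, the `Z k` are i.i.d. with pmf `pZ j a`
    (hZiid : ∀ (j : Fin N) (a : α) (z : Fin K → ζ),
      μ ({ω | Y ω = j} ∩ {ω | A ω = a} ∩ {ω | ∀ k, Z k ω = z k})
        = μ ({ω | Y ω = j} ∩ {ω | A ω = a}) * ENNReal.ofReal (∏ k, pZ j a (z k)))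
    -- Markov chain `{S i k} → (Y, A) → (Z 1, …, Z K)`: the `Z k` are conditionally
    -- independent of the shared randomness given `(Y, A)`
    (hMarkov : ∀ (j : Fin N) (a : α) (z : Fin K → ζ)
        (E : Set ((Fin N × Fin K) → ℝ)), MeasurableSet E →
      μ ({ω | (fun ik : Fin N × Fin K => S ik.1 ik.2 ω) ∈ E} ∩
            ({ω | Y ω = j} ∩ {ω | A ω = a} ∩ {ω | ∀ k, Z k ω = z k}))
          * μ ({ω | Y ω = j} ∩ {ω | A ω = a})
        = μ ({ω | (fun ik : Fin N × Fin K => S ik.1 ik.2 ω) ∈ E} ∩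
              ({ω | Y ω = j} ∩ {ω | A ω = a}))
          * μ ({ω | Y ω = j} ∩ {ω | A ω = a} ∩ {ω | ∀ k, Z k ω = z k}))
    (X : Fin K → Ω → Fin N) (hXmeas : ∀ k, Measurable (X k))
    -- `X k` is a.s. the unique argmin of `i ↦ S i k / p (Z k ω) i`
    (hX : ∀ᵐ ω ∂μ, ∀ k : Fin K, ∀ i : Fin N, i ≠ X k ω →
      S (X k ω) k ω / p (Z k ω) (X k ω) < S i k ω / p (Z k ω) i) :
    ∀ (j : Fin N) (a : α) (z : Fin K → ζ),
      μ ({ω | Y ω = j} ∩ {ω | A ω = a} ∩ {ω | ∀ k, Z k ω = z k}) ≠ 0 →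
      ENNReal.ofReal (∑ k : Fin K, ((K : ℝ) + q a j / p (z k) j)⁻¹)
        ≤ μ[|{ω | Y ω = j} ∩ {ω | A ω = a} ∩ {ω | ∀ k, Z k ω = z k}]
            {ω | ∃ k : Fin K, X k ω = Y ω} :=
  conditional_list_matching_lemma_general μ N K A q hq hqsum p hp hpsum S hSmeas hSindep hSexp hAS Y
    hY Z hMarkov X hX
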